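/- arXiv:2103.04591 — 8 statements merged into one kernel-verified Lean document; each statement's English description precedes it below -/
import Mathlib

section
/- Let q be a prime power, n a positive integer, t a divisor of n, and u ≥ 1. The monomial f(x) = x^{q^u} over F_{q^n} is L-q^t-partially scattered (i.e., for all nonzero y, z in F_{q^n}, f(y)/y = f(z)/z implies y/z ∈ F_{q^t}) if and only if gcd(u,n) divides t. -/
/-!
Since `y ^ q^u / y = z ^ q^u / z` says that `x = y / z` is a fixed point of `x ↦ x ^ q^u`, the
condition is that every nonzero solution of `x ^ (q^u - 1) = 1` also solves `x ^ (q^t - 1) = 1`. In the cyclic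
group `F_{q^n}^*` the solutions of the first equation form the subgroup of order
`gcd(q^u - 1, q^n - 1) = q^gcd(u,n) - 1`, so the condition reads `q^gcd(u,n) - 1 ∣ q^t - 1`,
that is, `gcd(u,n) ∣ t`.
-/

lemma Nat.pow_sub_one_dvd_pow_sub_one_iff {q a b : ℕ} (hq : 2 ≤ q) :
    q ^ a - 1 ∣ q ^ b - 1 ↔ a ∣ b := by
  refine ⟨fun h => ?_, Nat.pow_sub_one_dvd_pow_sub_one q⟩
  have hsub : q ^ a.gcd b - 1 = q ^ a - 1 := by
    rw [← Nat.pow_sub_one_gcd_pow_sub_one, Nat.gcd_eq_left h]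
  have hpow : q ^ a.gcd b = q ^ a :=
    Nat.sub_one_cancel (Nat.pow_pos (by omega)) (Nat.pow_pos (by omega)) hsub
  exact Nat.pow_right_injective hq hpow ▸ Nat.gcd_dvd_right a b

lemma IsCyclic.forall_pow_eq_one_imp_pow_eq_one_iff {G : Type*} [Group G] [Finite G] [IsCyclic G]
    (a b : ℕ) : (∀ x : G, x ^ a = 1 → x ^ b = 1) ↔ a.gcd (Nat.card G) ∣ b := by
  obtain ⟨g, hg⟩ := IsCyclic.exists_generator (α := G)
  have hg_order : orderOf g = Nat.card G := orderOf_eq_card_of_forall_mem_zpowers hg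
  constructor
  · intro h
    set d := a.gcd (Nat.card G)
    have hd : d ∣ Nat.card G := Nat.gcd_dvd_right a _
    have hx_order : orderOf (g ^ (Nat.card G / d)) = d := by
      rw [orderOf_pow, hg_order, Nat.gcd_eq_right (Nat.div_dvd_of_dvd hd),
        Nat.div_div_self hd Nat.card_pos.ne']
    rw [← hx_order, orderOf_dvd_iff_pow_eq_one]
    exact h _ (orderOf_dvd_iff_pow_eq_one.mp (by rw [hx_order]; exact Nat.gcd_dvd_left a _))
  · intro h x hx
    exact orderOf_dvd_iff_pow_eq_one.mp
      ((Nat.dvd_gcd (orderOf_dvd_of_pow_eq_one hx) (orderOf_dvd_natCard x)).trans h)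

lemma FiniteField.forall_pow_succ_eq_self_imp_iff {K : Type*} [Field K] [Finite K] (a b : ℕ) :
    (∀ x : K, x ≠ 0 → x ^ (a + 1) = x → x ^ (b + 1) = x) ↔ a.gcd (Nat.card K - 1) ∣ b := by
  rw [← Nat.card_units, ← IsCyclic.forall_pow_eq_one_imp_pow_eq_one_iff]
  have key : ∀ (x : Kˣ) (m : ℕ), (x : K) ^ (m + 1) = x ↔ x ^ m = 1 := by
    intro x m
    rw [pow_succ, mul_eq_right₀ x.ne_zero, ← Units.val_pow_eq_pow_val, Units.val_eq_one]
  refine ⟨fun h x => ?_, fun h x hx => ?_⟩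
  · simpa only [key] using h x x.ne_zero
  · simpa only [← key, Units.val_mk0] using h (Units.mk0 x hx)

lemma div_pow_self_eq_div_pow_self_iff {G : Type*} [CommGroupWithZero G] {y z : G} (hy : y ≠ 0)
    (hz : z ≠ 0) (m : ℕ) : y ^ m / y = z ^ m / z ↔ (y / z) ^ m = y / z := by
  rw [div_pow, div_eq_div_iff hy hz, div_eq_div_iff (pow_ne_zero m hz) hz, mul_comm (z ^ m)]

lemma forall_div_pow_self_eq_imp_iff {G : Type*} [CommGroupWithZero G] (a b : ℕ) :
    (∀ y z : G, y ≠ 0 → z ≠ 0 → y ^ a / y = z ^ a / z → (y / z) ^ b = y / z) ↔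
      ∀ x : G, x ≠ 0 → x ^ a = x → x ^ b = x := by
  refine ⟨fun h x hx hxa => ?_, fun h y z hy hz hyz => ?_⟩
  · simpa using h x 1 hx one_ne_zero (by simp [hxa, hx])
  · exact h _ (div_ne_zero hy hz) ((div_pow_self_eq_div_pow_self_iff hy hz a).mp hyz)

theorem monomial_L_partially_scattered_iff_general (q n t u : ℕ) (hq : IsPrimePow q)
    (F : Type) [Field F] [Fintype F] (hF : Fintype.card F = q ^ n) :
    (∀ y z : F, y ≠ 0 → z ≠ 0 →
        y ^ q ^ u / y = z ^ q ^ u / z → (y / z) ^ q ^ t = y / z) ↔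
      Nat.gcd u n ∣ t := by
  rw [forall_div_pow_self_eq_imp_iff, ← Nat.sub_add_cancel (Nat.pow_pos (n := u) hq.pos),
    ← Nat.sub_add_cancel (Nat.pow_pos (n := t) hq.pos),
    FiniteField.forall_pow_succ_eq_self_imp_iff, Nat.card_eq_fintype_card, hF,
    Nat.pow_sub_one_gcd_pow_sub_one, Nat.pow_sub_one_dvd_pow_sub_one_iff hq.two_le]

/-- The monomial `x ^ q^u` over `F_{q^n}` is L-`q^t`-partially scattered iff `gcd(u,n) ∣ t`. -/
theorem monomial_L_partially_scattered_iff (q n t u : ℕ) (hq : IsPrimePow q) (hn : 0 < n)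
    (ht : t ∣ n) (hu : 1 ≤ u)
    (F : Type) [Field F] [Fintype F] (hF : Fintype.card F = q ^ n) :
    (∀ y z : F, y ≠ 0 → z ≠ 0 →
        y ^ q ^ u / y = z ^ q ^ u / z → (y / z) ^ q ^ t = y / z) ↔
      Nat.gcd u n ∣ t :=
  monomial_L_partially_scattered_iff_general q n t u hq F hF
end

section
/- Let q be a prime power, n a positive integer, t a divisor of n, and u ≥ 1. The monomial f(x) = x^{q^u} over F_{q^n} is R-q^t-partially scattered (i.e., for all nonzero y, z in F_{q^n}, if f(y)/y = f(z)/z and y/z ∈ F_{q^t}, then y/z ∈ F_q) if and only if gcd(u,t) = 1. -/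
/-!
Write `w = y / z`. For nonzero `y, z` the condition `f(y)/y = f(z)/z` says exactly that
`w ^ q^u = w`, so the hypothesis asks that every common periodic point of period `u` and `t`
of the map `x ↦ x ^ q` be a fixed point. Periodic points of periods `u` and `t` have period
`gcd(u,t)`, which gives one direction. Conversely, if `d = gcd(u,t) ≥ 2`, an element of order
`q^d - 1` in the cyclic group `F_{q^n}ˣ` (it exists since `q^d - 1 ∣ q^n - 1`) is a periodic point
of period `d`, hence of periods `u` and `t`, but it is not fixed because `q^d - 1 > q - 1`.
-/

open Function

lemma isPeriodicPt_pow_iff {M : Type*} [Monoid M] {q s : ℕ} {x : M} :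
    IsPeriodicPt (· ^ q) s x ↔ x ^ q ^ s = x := by
  rw [IsPeriodicPt, IsFixedPt, pow_iterate]

lemma pow_eq_self_iff_orderOf_dvd {M₀ : Type*} [MonoidWithZero M₀] [IsCancelMulZero M₀]
    {w : M₀} (hw : w ≠ 0) {m : ℕ} (hm : 1 ≤ m) : w ^ m = w ↔ orderOf w ∣ m - 1 := by
  rw [orderOf_dvd_iff_pow_eq_one]
  nth_rewrite 1 [← Nat.sub_add_cancel hm]
  rw [pow_succ, mul_left_eq_self₀, or_iff_left hw]

lemma div_pow_eq_self_of_pow_div_self_eq {K : Type*} [Field K] {y z : K}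
    (hy : y ≠ 0) (hz : z ≠ 0) {m : ℕ} (h : y ^ m / y = z ^ m / z) : (y / z) ^ m = y / z := by
  rw [div_eq_div_iff hy hz] at h
  rw [div_pow, div_eq_div_iff (pow_ne_zero _ hz) hz]
  linear_combination h

lemma IsCyclic.exists_orderOf_eq_of_dvd_natCard {G : Type*} [Group G] [Finite G] [IsCyclic G]
    {k : ℕ} (hk : k ∣ Nat.card G) : ∃ g : G, orderOf g = k := by
  obtain ⟨g, hg⟩ := IsCyclic.exists_ofOrder_eq_natCard (α := G)
  exact ⟨g ^ (orderOf g / k), orderOf_pow_orderOf_div (orderOf_pos g).ne' (hg ▸ hk)⟩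

lemma FiniteField.exists_orderOf_eq_pow_sub_one {F : Type*} [Field F] [Fintype F] {q n d : ℕ}
    (hF : Fintype.card F = q ^ n) (hd : d ∣ n) : ∃ ζ : Fˣ, orderOf ζ = q ^ d - 1 :=
  IsCyclic.exists_orderOf_eq_of_dvd_natCard <| by
    rw [Nat.card_units, Nat.card_eq_fintype_card, hF]
    exact Nat.pow_sub_one_dvd_pow_sub_one q hd

lemma FiniteField.exists_isPeriodicPt_pow_ne_self {F : Type*} [Field F] [Fintype F]
    {q n d : ℕ} (hq : 2 ≤ q) (hF : Fintype.card F = q ^ n) (hd : d ∣ n) (hd2 : 2 ≤ d) :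
    ∃ w : F, w ≠ 0 ∧ IsPeriodicPt (· ^ q) d w ∧ w ^ q ≠ w := by
  obtain ⟨ζ, hζ⟩ := exists_orderOf_eq_pow_sub_one hF hd
  have hw : (ζ : F) ≠ 0 := ζ.ne_zero
  refine ⟨ζ, hw, isPeriodicPt_pow_iff.2 ?_, ?_⟩
  · rw [pow_eq_self_iff_orderOf_dvd hw (Nat.one_le_pow _ _ (by omega)), orderOf_units, hζ]
  · rw [Ne, pow_eq_self_iff_orderOf_dvd hw (by omega), orderOf_units, hζ]
    intro hdvd
    have := Nat.le_of_dvd (by omega) hdvd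
    have : q ^ 1 < q ^ d := Nat.pow_lt_pow_right hq hd2
    rw [pow_one] at this
    omega

theorem monomial_R_partially_scattered_iff_general (q n t u : ℕ) (hq : IsPrimePow q)
    (ht : t ∣ n) (hu : 1 ≤ u)
    (F : Type) [Field F] [Fintype F] (hF : Fintype.card F = q ^ n) :
    (∀ y z : F, y ≠ 0 → z ≠ 0 →
        y ^ q ^ u / y = z ^ q ^ u / z → (y / z) ^ q ^ t = y / z → (y / z) ^ q = y / z) ↔
      Nat.gcd u t = 1 := by
  constructor
  · intro h
    by_contra hne
    have hd2 : 2 ≤ Nat.gcd u t := by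
      have := Nat.gcd_pos_of_pos_left t hu
      omega
    obtain ⟨w, hw, hperiodic, hnot_fixed⟩ := FiniteField.exists_isPeriodicPt_pow_ne_self
      hq.two_le hF ((Nat.gcd_dvd_right u t).trans ht) hd2
    have hwu := isPeriodicPt_pow_iff.1 (hperiodic.trans_dvd (Nat.gcd_dvd_left u t))
    have hwt := isPeriodicPt_pow_iff.1 (hperiodic.trans_dvd (Nat.gcd_dvd_right u t))
    exact hnot_fixed (by simpa using h w 1 hw one_ne_zero (by simp [hwu, hw]) (by simpa using hwt))
  · intro hcoprime y z hy hz hyz hperiod_t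
    have hperiodic := (isPeriodicPt_pow_iff.2 (div_pow_eq_self_of_pow_div_self_eq hy hz hyz)).gcd
      (isPeriodicPt_pow_iff.2 hperiod_t)
    rwa [hcoprime, isPeriodicPt_pow_iff, pow_one] at hperiodic

/-- The monomial `x ^ q^u` over `F_{q^n}` is R-`q^t`-partially scattered iff `gcd(u,t) = 1`. -/
theorem monomial_R_partially_scattered_iff (q n t u : ℕ) (hq : IsPrimePow q) (hn : 0 < n)
    (ht : t ∣ n) (hu : 1 ≤ u)
    (F : Type) [Field F] [Fintype F] (hF : Fintype.card F = q ^ n) :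
    (∀ y z : F, y ≠ 0 → z ≠ 0 →
        y ^ q ^ u / y = z ^ q ^ u / z → (y / z) ^ q ^ t = y / z → (y / z) ^ q = y / z) ↔
      Nat.gcd u t = 1 :=
  monomial_R_partially_scattered_iff_general q n t u hq ht hu F hF
end

section
/- Let f be an F_q-linear map on F_{q^n} and for ρ ∈ F_{q^n}^* define f_ρ(x) = f(ρx) − ρ f(x). Then f is R-q^t-partially scattered if and only if f_ρ is bijective on F_{q^n} for every ρ ∈ F_{q^t} \ F_q. -/
/-!
Since `f` is additive, so is `f_ρ`, and on the finite field it is bijective iff its kernel is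
trivial. For `ρ ≠ 0` and `x ≠ 0`, `f_ρ x = 0` says exactly that `y = ρ x` and `z = x` satisfy
`f y / y = f z / z` with `y / z = ρ`. So a nonzero kernel element of some `f_ρ` with
`ρ ∈ F_{q^t} \ F_q` is the same thing as a pair `y, z` violating partial scatteredness.
-/

namespace AddMonoidHom

variable {K : Type*} [Field K]

/-- The map `f_ρ` of the paper. -/
def twist (f : K →+ K) (ρ : K) : K →+ K :=
  f.comp (mulLeft ρ) - (mulLeft ρ).comp f

@[simp]
theorem twist_apply (f : K →+ K) (ρ x : K) : f.twist ρ x = f (ρ * x) - ρ * f x :=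
  rfl

theorem twist_eq_zero_iff_div_eq {f : K →+ K} {ρ x : K} (hρ : ρ ≠ 0) (hx : x ≠ 0) :
    f.twist ρ x = 0 ↔ f (ρ * x) / (ρ * x) = f x / x := by
  rw [twist_apply, sub_eq_zero, div_eq_div_iff (mul_ne_zero hρ hx) hx,
    show f x * (ρ * x) = ρ * f x * x by ring, mul_left_inj' hx]

theorem injective_twist_iff {f : K →+ K} {ρ : K} (hρ : ρ ≠ 0) :
    Function.Injective (f.twist ρ) ↔
      ∀ y z : K, y ≠ 0 → z ≠ 0 → y / z = ρ → f y / y ≠ f z / z := by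
  rw [injective_iff_map_eq_zero']
  constructor
  · rintro h y z hy hz rfl hyz
    refine hz ((h z).mp ?_)
    rwa [twist_eq_zero_iff_div_eq hρ hz, div_mul_cancel₀ y hz]
  · intro h x
    refine ⟨fun hx => by_contra fun hx0 => ?_, by rintro rfl; exact map_zero _⟩
    exact h (ρ * x) x (mul_ne_zero hρ hx0) hx0 (mul_div_cancel_right₀ ρ hx0)
      ((twist_eq_zero_iff_div_eq hρ hx0).mp hx)

end AddMonoidHom

theorem R_partially_scattered_iff_bijective_general (q t : ℕ) (hq : IsPrimePow q)
    (F : Type) [Field F] [Fintype F]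
    (f : F → F) (hadd : ∀ x y, f (x + y) = f x + f y) :
    (∀ y z : F, y ≠ 0 → z ≠ 0 →
        f y / y = f z / z → (y / z) ^ q ^ t = y / z → (y / z) ^ q = y / z) ↔
      ∀ ρ : F, ρ ^ q ^ t = ρ → ¬ ρ ^ q = ρ →
        Function.Bijective (fun x => f (ρ * x) - ρ * f x) := by
  have ne_zero_of_pow_ne : ∀ ρ : F, ¬ ρ ^ q = ρ → ρ ≠ 0 := by
    rintro ρ hρ rfl
    exact hρ (zero_pow hq.pos.ne')
  have bijective_iff : ∀ ρ : F, ¬ ρ ^ q = ρ →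
      (Function.Bijective (fun x => f (ρ * x) - ρ * f x) ↔
        ∀ y z : F, y ≠ 0 → z ≠ 0 → y / z = ρ → f y / y ≠ f z / z) := fun ρ hρ =>
    (Finite.injective_iff_bijective (f := (AddMonoidHom.mk' f hadd).twist ρ)).symm.trans
      (AddMonoidHom.injective_twist_iff (ne_zero_of_pow_ne ρ hρ))
  constructor
  · intro h ρ hρt hρq
    rw [bijective_iff ρ hρq]
    rintro y z hy hz rfl hyz
    exact hρq (h y z hy hz hyz hρt)
  · intro h y z hy hz hyz hpow
    by_contra hpow'
    exact (bijective_iff _ hpow').mp (h _ hpow hpow') y z hy hz rfl hyz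

/-- An `F_q`-linear map `f` on `F_{q^n}` is R-`q^t`-partially scattered iff
`f_ρ(x) = f(ρx) - ρ f(x)` is bijective for every `ρ ∈ F_{q^t} \ F_q`. -/
theorem R_partially_scattered_iff_bijective (q n t : ℕ) (hq : IsPrimePow q) (hn : 0 < n)
    (ht : t ∣ n)
    (F : Type) [Field F] [Fintype F] (hF : Fintype.card F = q ^ n)
    (f : F → F) (hadd : ∀ x y, f (x + y) = f x + f y)
    (hsmul : ∀ c x : F, c ^ q = c → f (c * x) = c * f x) :
    (∀ y z : F, y ≠ 0 → z ≠ 0 →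
        f y / y = f z / z → (y / z) ^ q ^ t = y / z → (y / z) ^ q = y / z) ↔
      ∀ ρ : F, ρ ^ q ^ t = ρ → ¬ ρ ^ q = ρ →
        Function.Bijective (fun x => f (ρ * x) - ρ * f x) :=
  R_partially_scattered_iff_bijective_general q t hq F f hadd
end

section
/- Let f be an F_q-linear map on F_{q^n} and for ρ ∈ F_{q^n}^* define f_ρ(x) = f(ρx) − ρ f(x). Then f is L-q^t-partially scattered if and only if f_ρ is bijective on F_{q^n} for every ρ ∈ F_{q^n} \ F_{q^t}. -/
/-!
Both sides say that no nonzero `w` satisfies `f (ρ w) / (ρ w) = f w / w` with `ρ` outside the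
subfield: on the left `ρ` is the quotient `y / z`, on the right `w` is a nonzero element of the
kernel of the additive map `f_ρ`. Over a finite field, injectivity of `f_ρ` is bijectivity.
-/

variable {K : Type*} [Field K]

/-- The map written `f_ρ` in the paper. -/
def twist (f : K →+ K) (ρ : K) : K →+ K :=
  f.comp (AddMonoidHom.mulLeft ρ) - (AddMonoidHom.mulLeft ρ).comp f

@[simp]
lemma twist_apply (f : K →+ K) (ρ x : K) : twist f ρ x = f (ρ * x) - ρ * f x := rfl

def IsPartiallyScattered (f : K → K) (S : Set K) : Prop :=
  ∀ y z : K, y ≠ 0 → z ≠ 0 → f y / y = f z / z → y / z ∈ S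

lemma sub_mul_eq_zero_iff_div_eq_div (f : K → K) {ρ w : K} (hρ : ρ ≠ 0) (hw : w ≠ 0) :
    f (ρ * w) - ρ * f w = 0 ↔ f (ρ * w) / (ρ * w) = f w / w := by
  rw [sub_eq_zero, div_eq_div_iff (mul_ne_zero hρ hw) hw, ← mul_assoc,
    mul_comm (f w) ρ, mul_left_inj' hw]

theorem isPartiallyScattered_iff_twist_injective (f : K →+ K) {S : Set K} (hS : (0 : K) ∈ S) :
    IsPartiallyScattered f S ↔ ∀ ρ ∉ S, Function.Injective (twist f ρ) := by
  constructor
  · intro hf ρ hρ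
    have hρ0 : ρ ≠ 0 := by rintro rfl; exact hρ hS
    refine (injective_iff_map_eq_zero _).mpr fun w hw => by_contra fun hw0 => hρ ?_
    have hdiv := (sub_mul_eq_zero_iff_div_eq_div f hρ0 hw0).mp hw
    simpa [hw0] using hf _ _ (mul_ne_zero hρ0 hw0) hw0 hdiv
  · intro hinj y z hy hz hyz
    by_contra hS'
    have hρ0 : y / z ≠ 0 := div_ne_zero hy hz
    have hker : twist f (y / z) z = 0 := by
      rw [twist_apply, sub_mul_eq_zero_iff_div_eq_div f hρ0 hz, div_mul_cancel₀ y hz]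
      exact hyz
    exact hz (hinj _ hS' (hker.trans (map_zero _).symm))

theorem L_partially_scattered_iff_bijective_general (q t : ℕ) (hq : IsPrimePow q)
    (F : Type) [Field F] [Fintype F]
    (f : F → F) (hadd : ∀ x y, f (x + y) = f x + f y) :
    (∀ y z : F, y ≠ 0 → z ≠ 0 →
        f y / y = f z / z → (y / z) ^ q ^ t = y / z) ↔
      ∀ ρ : F, ¬ ρ ^ q ^ t = ρ →
        Function.Bijective (fun x => f (ρ * x) - ρ * f x) := by
  have hS : (0 : F) ∈ {ρ : F | ρ ^ q ^ t = ρ} := zero_pow (pow_pos hq.pos t).ne'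
  simp only [← Finite.injective_iff_bijective]
  exact isPartiallyScattered_iff_twist_injective (AddMonoidHom.mk' f hadd) hS

/-- An `F_q`-linear map `f` on `F_{q^n}` is L-`q^t`-partially scattered iff
`f_ρ(x) = f(ρx) - ρ f(x)` is bijective for every `ρ ∈ F_{q^n} \ F_{q^t}`. -/
theorem L_partially_scattered_iff_bijective (q n t : ℕ) (hq : IsPrimePow q) (hn : 0 < n)
    (ht : t ∣ n)
    (F : Type) [Field F] [Fintype F] (hF : Fintype.card F = q ^ n)
    (f : F → F) (hadd : ∀ x y, f (x + y) = f x + f y)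
    (hsmul : ∀ c x : F, c ^ q = c → f (c * x) = c * f x) :
    (∀ y z : F, y ≠ 0 → z ≠ 0 →
        f y / y = f z / z → (y / z) ^ q ^ t = y / z) ↔
      ∀ ρ : F, ¬ ρ ^ q ^ t = ρ →
        Function.Bijective (fun x => f (ρ * x) - ρ * f x) :=
  L_partially_scattered_iff_bijective_general q t hq F f hadd
end

section
/- Let f be an F_q-linear map on F_{q^n}. Then f is scattered (for all nonzero y, z, f(y)/y = f(z)/z implies y/z ∈ F_q) if and only if the map f_ρ(x) = f(ρx) − ρf(x) is bijective on F_{q^n} for every ρ ∈ F_{q^n} \ F_q. -/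
/-!
`f(y)/y = f(z)/z` with `y, z ≠ 0` says exactly that `z` lies in the kernel of the additive map
`f_ρ` for `ρ = y/z`, and conversely a nonzero kernel element `x` of `f_ρ` gives the equal ratios
`f(ρx)/(ρx) = f(x)/x`. So scatteredness says that `f_ρ` has trivial kernel whenever `ρ ∉ F_q`,
and on a finite field an injective map is bijective.
-/

variable {F : Type*} [Field F]

/-- The paper's `f_ρ`. -/
def mulCommutator (f : F →+ F) (ρ : F) : F →+ F :=
  f.comp (AddMonoidHom.mulLeft ρ) - (AddMonoidHom.mulLeft ρ).comp f

@[simp]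
theorem mulCommutator_apply (f : F →+ F) (ρ x : F) : mulCommutator f ρ x = f (ρ * x) - ρ * f x :=
  rfl

theorem mulCommutator_apply_eq_zero_iff (f : F →+ F) {ρ x : F} (hρ : ρ ≠ 0) (hx : x ≠ 0) :
    mulCommutator f ρ x = 0 ↔ f (ρ * x) / (ρ * x) = f x / x := by
  rw [mulCommutator_apply, sub_eq_zero, ← div_div, div_left_inj' hx, div_eq_iff hρ, mul_comm (f x)]

theorem forall_div_eq_imp_iff_injective_mulCommutator (f : F →+ F) (P : F → Prop) (hP : P 0) :
    (∀ y z : F, y ≠ 0 → z ≠ 0 → f y / y = f z / z → P (y / z)) ↔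
      ∀ ρ, ¬ P ρ → Function.Injective (mulCommutator f ρ) := by
  constructor
  · intro hscat ρ hρ
    have hρ0 : ρ ≠ 0 := by rintro rfl; exact hρ hP
    refine (injective_iff_map_eq_zero _).2 fun x hx ↦ by_contra fun hx0 ↦ hρ ?_
    have hratio := (mulCommutator_apply_eq_zero_iff f hρ0 hx0).1 hx
    simpa [hx0] using hscat _ _ (mul_ne_zero hρ0 hx0) hx0 hratio
  · intro hinj y z hy hz hyz
    by_contra hP'
    have hρ0 : y / z ≠ 0 := div_ne_zero hy hz
    refine hz ((injective_iff_map_eq_zero _).1 (hinj _ hP') z ?_)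
    rwa [mulCommutator_apply_eq_zero_iff f hρ0 hz, div_mul_cancel₀ y hz]

theorem scattered_iff_bijective_general (q : ℕ) (hq : IsPrimePow q)
    (F : Type) [Field F] [Fintype F]
    (f : F → F) (hadd : ∀ x y, f (x + y) = f x + f y) :
    (∀ y z : F, y ≠ 0 → z ≠ 0 →
        f y / y = f z / z → (y / z) ^ q = y / z) ↔
      ∀ ρ : F, ¬ ρ ^ q = ρ →
        Function.Bijective (fun x => f (ρ * x) - ρ * f x) := by
  have hzero : (0 : F) ^ q = 0 := zero_pow hq.ne_zero
  simp only [← Finite.injective_iff_bijective]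
  exact forall_div_eq_imp_iff_injective_mulCommutator (.mk' f hadd) (fun ρ ↦ ρ ^ q = ρ) hzero

/-- An `F_q`-linear map `f` on `F_{q^n}` is scattered iff
`f_ρ(x) = f(ρx) - ρ f(x)` is bijective for every `ρ ∈ F_{q^n} \ F_q`. -/
theorem scattered_iff_bijective (q n : ℕ) (hq : IsPrimePow q) (hn : 0 < n)
    (F : Type) [Field F] [Fintype F] (hF : Fintype.card F = q ^ n)
    (f : F → F) (hadd : ∀ x y, f (x + y) = f x + f y)
    (hsmul : ∀ c x : F, c ^ q = c → f (c * x) = c * f x) :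
    (∀ y z : F, y ≠ 0 → z ≠ 0 →
        f y / y = f z / z → (y / z) ^ q = y / z) ↔
      ∀ ρ : F, ¬ ρ ^ q = ρ →
        Function.Bijective (fun x => f (ρ * x) - ρ * f x) :=
  scattered_iff_bijective_general q hq F f hadd
end

section
/- The F_{q^t}-linearized polynomial g(x) = α x + β x^{q^t} + x^{q^{2t}} over F_{q^{3t}} is bijective on F_{q^{3t}} if and only if N_{q^{3t}/q^t}(α) + N_{q^{3t}/q^t}(β) − Tr_{q^{3t}/q^t}(α β^{q^t}) + 1 ≠ 0. -/
/-!
Put `Q = q ^ t` and `φ x = x ^ Q`, so that `φ³ = 1` on `F`, and write `g = α + β φ + φ²`.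
The linearized polynomial `M` read off the first row of the adjugate of the Dickson matrix
of `g` has that adjugate as its own Dickson matrix, hence `M ∘ g = g ∘ M = det · id`.
So `det ≠ 0` makes `g` injective, and if `det = 0` every value of `M` lies in the kernel
of `g`. If moreover `M` vanishes identically, its coefficients vanish because `x`, `x ^ Q`,
`x ^ Q²` are independent functions on a field with `Q³` elements; this forces `β = α φ(α)`
and `β φ²(α) = 1`, and then `g (φ(α) φ(x)) = g x` although `x ↦ φ(α) φ(x)` is not the
identity.
-/

open Polynomial in
theorem eq_zero_of_forall_sum_mul_pow_eq_zero {K ι : Type*} [Field K] [Fintype K] [Fintype ι]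
    {e : ι → ℕ} (he : Function.Injective e) (hlt : ∀ i, e i < Fintype.card K) {c : ι → K}
    (h : ∀ x, ∑ i, c i * x ^ e i = 0) (i : ι) : c i = 0 := by
  classical
  set P : K[X] := ∑ j, C (c j) * X ^ e j
  have hdeg : P.natDegree ≤ Fintype.card K - 1 :=
    natDegree_sum_le_of_forall_le _ _ fun j _ ↦
      (natDegree_C_mul_X_pow_le _ _).trans (Nat.le_sub_one_of_lt (hlt j))
  have hP : P = 0 :=
    eq_zero_of_natDegree_lt_card_of_eval_eq_zero P Function.injective_id
      (fun x ↦ by simpa [P, eval_finsetSum] using h x) (by have := Fintype.card_pos (α := K); omega)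
  simpa [P, finsetSum_coeff, coeff_C_mul_X_pow, he.eq_iff, Finset.sum_ite_eq] using
    congrArg (coeff · (e i)) hP

variable {F : Type*} [Field F] (φ : F →+* F)

def linearized (a b c x : F) : F := a * x + b * φ x + c * φ (φ x)

def dicksonMatrix (a b c : F) : Matrix (Fin 3) (Fin 3) F :=
  !![a, b, c; φ c, φ a, φ b; φ (φ b), φ (φ c), φ (φ a)]

def adjugateLinearized (a b c : F) : F → F :=
  let A := (dicksonMatrix φ a b c).adjugate
  linearized φ (A 0 0) (A 0 1) (A 0 2)

section OrderThree

variable {φ} (hφ : ∀ x, φ (φ (φ x)) = x)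
include hφ

theorem det_dicksonMatrix (α β : F) :
    (dicksonMatrix φ α β 1).det = α * φ α * φ (φ α) + β * φ β * φ (φ β) -
      (α * φ β + φ (α * φ β) + φ (φ (α * φ β))) + 1 := by
  simp only [dicksonMatrix, Matrix.det_fin_three, Matrix.of_apply, Matrix.cons_val',
    Matrix.cons_val_zero, Matrix.cons_val_one, Matrix.cons_val_two, Matrix.empty_val',
    Matrix.cons_val_fin_one, Matrix.head_cons, Matrix.tail_cons, Matrix.head_fin_const, map_mul,
    map_one, hφ]
  ring

theorem adjugateLinearized_linearized (a b c x : F) :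
    adjugateLinearized φ a b c (linearized φ a b c x) = (dicksonMatrix φ a b c).det * x := by
  simp only [adjugateLinearized, dicksonMatrix, Matrix.adjugate_fin_three, Matrix.of_apply,
    Matrix.cons_val', Matrix.cons_val_one, Matrix.cons_val_zero, Matrix.cons_val_fin_one,
    Matrix.cons_val, linearized, map_add, map_mul, hφ, Matrix.det_fin_three]
  ring

theorem linearized_adjugateLinearized (a b c x : F) :
    linearized φ a b c (adjugateLinearized φ a b c x) = (dicksonMatrix φ a b c).det * x := by
  simp only [linearized, adjugateLinearized, dicksonMatrix, Matrix.adjugate_fin_three,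
    Matrix.of_apply, Matrix.cons_val', Matrix.cons_val_one, Matrix.cons_val_zero,
    Matrix.cons_val_fin_one, Matrix.cons_val, map_add, map_mul, map_sub, map_neg, hφ,
    Matrix.det_fin_three]
  ring

theorem linearized_injective_of_det_ne_zero {a b c : F} (hdet : (dicksonMatrix φ a b c).det ≠ 0) :
    Function.Injective (linearized φ a b c) := fun x y hxy ↦
  mul_left_cancel₀ hdet <| by
    rw [← adjugateLinearized_linearized hφ, hxy, adjugateLinearized_linearized hφ]

theorem linearized_mul_map_eq {α β : F} (h₀ : (dicksonMatrix φ α β 1).adjugate 0 0 = 0)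
    (h₁ : (dicksonMatrix φ α β 1).adjugate 0 1 = 0) (x : F) :
    linearized φ α β 1 (φ α * φ x) = linearized φ α β 1 x := by
  simp only [dicksonMatrix, map_one, Matrix.adjugate_fin_three, Matrix.of_apply, Matrix.cons_val',
    Matrix.cons_val_one, Matrix.cons_val_zero, Matrix.cons_val_fin_one, Matrix.cons_val, mul_one,
    one_mul] at h₀ h₁
  have hβ : α * φ α = β := by simpa [hφ] using congrArg (fun y ↦ φ (φ y)) (sub_eq_zero.mp h₀)
  simp only [linearized, map_mul, hφ, one_mul]
  linear_combination φ x * hβ - φ (φ x) * h₁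

end OrderThree

section FiniteField

variable {φ} [Fintype F] {Q : ℕ} (hcard : Fintype.card F = Q ^ 3) (hφ : ∀ x, φ x = x ^ Q)
include hcard hφ

theorem map_map_map_of_card_eq_pow_three (x : F) : φ (φ (φ x)) = x := by
  rw [hφ, hφ, hφ, ← pow_mul, ← pow_mul, ← pow_three, ← hcard, FiniteField.pow_card]

theorem eq_zero_of_forall_linearized_eq_zero {a b c : F} (h : ∀ x, linearized φ a b c x = 0) :
    a = 0 ∧ b = 0 ∧ c = 0 := by
  have hQ : 1 < Q := (one_lt_pow_iff_of_nonneg Q.zero_le three_ne_zero).mp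
    (hcard ▸ Fintype.one_lt_card)
  have hmono : StrictMono ![1, Q, Q ^ 2] := Fin.strictMono_iff_lt_succ.mpr fun i ↦ by
    fin_cases i
    · simpa using hQ
    · simpa using Nat.pow_lt_pow_right hQ one_lt_two
  have hlt (i : Fin 3) : ![1, Q, Q ^ 2] i < Fintype.card F :=
    (hmono.monotone (Fin.le_last i)).trans_lt (hcard ▸ Nat.pow_lt_pow_right hQ (by norm_num))
  have := eq_zero_of_forall_sum_mul_pow_eq_zero hmono.injective hlt (c := ![a, b, c])
    fun x ↦ by simpa [Fin.sum_univ_three, linearized, hφ, ← pow_mul, sq] using h x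
  exact ⟨this 0, this 1, this 2⟩

theorem linearized_bijective_iff_det_ne_zero (α β : F) :
    Function.Bijective (linearized φ α β 1) ↔ (dicksonMatrix φ α β 1).det ≠ 0 := by
  have hφ₃ := map_map_map_of_card_eq_pow_three hcard hφ
  refine ⟨fun hbij hdet ↦ ?_, fun hdet ↦
    Finite.injective_iff_bijective.mp (linearized_injective_of_det_ne_zero hφ₃ hdet)⟩
  by_cases hadj : ∀ x, adjugateLinearized φ α β 1 x = 0
  · obtain ⟨h₀, h₁, -⟩ := eq_zero_of_forall_linearized_eq_zero hcard hφ hadj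
    obtain ⟨x, hx⟩ : ∃ x, φ α * φ x ≠ x := by
      by_contra! hfix
      simpa using (eq_zero_of_forall_linearized_eq_zero hcard hφ (a := -1) (b := φ α) (c := 0)
        fun x ↦ by simp [linearized, hfix]).1
    exact hx (hbij.injective (linearized_mul_map_eq hφ₃ h₀ h₁ x))
  · obtain ⟨x, hx⟩ := not_forall.mp hadj
    refine hx (hbij.injective ?_)
    rw [linearized_adjugateLinearized hφ₃, hdet, zero_mul]
    simp [linearized]

end FiniteField

theorem trinomial_bijective_iff_general (q t : ℕ) (hq : IsPrimePow q)
    (F : Type) [Field F] [Fintype F] (hF : Fintype.card F = q ^ (3 * t)) (α β : F) :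
    Function.Bijective (fun x : F => α * x + β * x ^ q ^ t + x ^ q ^ (2 * t)) ↔
      α * α ^ q ^ t * α ^ q ^ (2 * t) + β * β ^ q ^ t * β ^ q ^ (2 * t) -
          (α * β ^ q ^ t + (α * β ^ q ^ t) ^ q ^ t + (α * β ^ q ^ t) ^ q ^ (2 * t)) + 1 ≠ 0 := by
  obtain ⟨p, s, hp, -, rfl⟩ := hq
  have := Fact.mk hp.nat_prime
  have : CharP F p := charP_of_card_eq_prime_pow (hF.trans (pow_mul ..).symm)
  set φ := iterateFrobenius F p (s * t)
  have hφ (x : F) : φ x = x ^ (p ^ s) ^ t := by rw [← pow_mul]; rfl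
  have hφφ (x : F) : φ (φ x) = x ^ (p ^ s) ^ (2 * t) := by
    rw [two_mul, pow_add, pow_mul, hφ, hφ]
  have hcard : Fintype.card F = ((p ^ s) ^ t) ^ 3 := by rw [hF]; ring
  simp only [← hφ, ← hφφ]
  rw [← det_dicksonMatrix (map_map_map_of_card_eq_pow_three hcard hφ)]
  convert linearized_bijective_iff_det_ne_zero hcard hφ α β using 3
  simp [linearized]

/-- The `F_{q^t}`-linearized polynomial `g(x) = α x + β x^{q^t} + x^{q^{2t}}` is bijective on
`F_{q^{3t}}` iff `N(α) + N(β) - Tr(α β^{q^t}) + 1 ≠ 0`. -/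
theorem trinomial_bijective_iff (q t : ℕ) (hq : IsPrimePow q) (ht : 0 < t)
    (F : Type) [Field F] [Fintype F] (hF : Fintype.card F = q ^ (3 * t)) (α β : F) :
    Function.Bijective (fun x : F => α * x + β * x ^ q ^ t + x ^ q ^ (2 * t)) ↔
      α * α ^ q ^ t * α ^ q ^ (2 * t) + β * β ^ q ^ t * β ^ q ^ (2 * t) -
          (α * β ^ q ^ t + (α * β ^ q ^ t) ^ q ^ t + (α * β ^ q ^ t) ^ q ^ (2 * t)) + 1 ≠ 0 :=
  trinomial_bijective_iff_general q t hq F hF α β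
end

section
/- Let n be odd, gcd(s,n)=1, and δ ∈ F_{q^n} with N_{q^n/q}(δ) = 1. Then for every ρ ∈ F_{q^n} \ F_q there exists x₀ ∈ F_{q^n}^* with f(ρ x₀)/( ρ x₀) = f(x₀)/x₀ where f(x) = x^{q^{s(n−1)}} + δ x^{q^s}; in particular the LP polynomial f is not scattered. -/
/-!
Write `σ x = x ^ q ^ s`, so that `σ ^ n = 1` and `x ^ q ^ (s * (n - 1)) = σ⁻¹ x`. For `ρ ∉ 𝔽_q` the
equation `f (ρ x) = ρ f x` reads `b σ⁻¹ x = δ a σ x` with `a = ρ - σ ρ` and `b = σ⁻¹ ρ - ρ = σ⁻¹ a`;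
both are nonzero because `gcd (s, n) = 1`. The coefficient `c = δ a / b` has norm one, hence so
has `(σ c)⁻¹`, and since `gcd (q ^ (2 s) - 1, q ^ n - 1) = q - 1` for odd `n`, it is a
`(q ^ (2 s) - 1)`-th power `v ^ (q ^ (2 s) - 1)`. Then `σ² v · σ c = v`, i.e. `σ⁻¹ v = c σ v`,
so `x₀ = v` works; and `y = ρ v`, `z = v` witness that `f` is not scattered.
-/

open Function

theorem IsCyclic.exists_pow_eq_of_pow_eq_one {G : Type*} [CommGroup G] [IsCyclic G] [Finite G]
    {e : ℕ} {u : G} (hu : u ^ (Nat.card G / (Nat.card G).gcd e) = 1) : ∃ v, v ^ e = u := by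
  set N := Nat.card G
  have hle : (powMonoidHom e : G →* G).range ≤ (powMonoidHom (N / N.gcd e) : G →* G).ker := by
    rintro _ ⟨v, rfl⟩
    have hexp : e * (N / N.gcd e) = N * (e / N.gcd e) := by
      rw [← Nat.mul_div_assoc _ (Nat.gcd_dvd_left N e), mul_comm,
        Nat.mul_div_assoc _ (Nat.gcd_dvd_right N e)]
    simp only [MonoidHom.mem_ker, powMonoidHom_apply]
    rw [← pow_mul, hexp, pow_mul, pow_card_eq_one', one_pow]
  have hcard : Nat.card (powMonoidHom (N / N.gcd e) : G →* G).ker ≤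
      Nat.card (powMonoidHom e : G →* G).range := by
    rw [IsCyclic.card_powMonoidHom_ker, IsCyclic.card_powMonoidHom_range]
    exact Nat.le_of_dvd
      (Nat.div_pos (Nat.gcd_le_left e Nat.card_pos) (Nat.gcd_pos_of_pos_left e Nat.card_pos))
      (Nat.gcd_dvd_right _ _)
  obtain ⟨v, hv⟩ : u ∈ (powMonoidHom e : G →* G).range :=
    Subgroup.eq_of_le_of_card_ge hle hcard ▸ hu
  exact ⟨v, hv⟩

/-- The norm `N_{q^n/q} x = x ^ (1 + q + ⋯ + q ^ (n - 1))`. -/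
def qNorm {F : Type*} [Field F] (q n : ℕ) (x : F) : F := x ^ ((q ^ n - 1) / (q - 1))

def lpMap {F : Type*} [Field F] (q n s : ℕ) (δ x : F) : F := x ^ q ^ (s * (n - 1)) + δ * x ^ q ^ s

lemma mul_pred_add_self (s : ℕ) {n : ℕ} (hn : 0 < n) : s * (n - 1) + s = n * s := by
  rw [Nat.mul_sub_one, mul_comm n s, Nat.sub_add_cancel (Nat.le_mul_of_pos_right s hn)]

section FiniteField

variable {F : Type*} [Field F] [Fintype F] {q n : ℕ}

lemma one_lt_and_ne_zero_of_card_eq (hF : Fintype.card F = q ^ n) : 1 < q ∧ n ≠ 0 := by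
  have h := Fintype.one_lt_card (α := F)
  rw [hF] at h
  have hn : n ≠ 0 := by rintro rfl; simp at h
  exact ⟨(one_lt_pow_iff hn).1 h, hn⟩

lemma ne_zero_of_pow_ne_self (hF : Fintype.card F = q ^ n) {ρ : F} (hρ : ρ ^ q ≠ ρ) : ρ ≠ 0 := by
  rintro rfl
  exact hρ (zero_pow (one_lt_and_ne_zero_of_card_eq hF).1.ne_bot)

lemma pow_pow_add_mul_of_card_eq (hF : Fintype.card F = q ^ n) (x : F) (k j : ℕ) :
    x ^ q ^ (k + n * j) = x ^ q ^ k := by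
  rw [pow_add, pow_mul q n, ← hF, pow_mul, FiniteField.pow_card_pow]

lemma sub_pow_pow_of_card_eq (hF : Fintype.card F = q ^ n) (x y : F) (k : ℕ) :
    (x - y) ^ q ^ k = x ^ q ^ k - y ^ q ^ k := by
  obtain ⟨p, _, m, hp, hcard⟩ := FiniteField.card' F
  have : Fact p.Prime := ⟨hp⟩
  have hq : q ∣ p ^ (m : ℕ) := hcard ▸ hF ▸ dvd_pow_self q (one_lt_and_ne_zero_of_card_eq hF).2
  obtain ⟨i, -, rfl⟩ := (Nat.dvd_prime_pow hp).1 hq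
  rw [← pow_mul]
  exact sub_pow_char_pow x y _

lemma pow_eq_self_of_pow_pow_eq_self (hF : Fintype.card F = q ^ n) {k : ℕ} (hk : k.Coprime n)
    {x : F} (hx : x ^ q ^ k = x) : x ^ q = x := by
  have hxk : IsPeriodicPt (· ^ q) k x := by
    rw [IsPeriodicPt, IsFixedPt, pow_iterate]; exact hx
  have hxn : IsPeriodicPt (· ^ q) n x := by
    rw [IsPeriodicPt, IsFixedPt, pow_iterate, ← hF]; exact FiniteField.pow_card x
  simpa [IsPeriodicPt, IsFixedPt, pow_iterate, hk] using hxk.gcd hxn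

lemma qNorm_zero (hF : Fintype.card F = q ^ n) : qNorm q n (0 : F) = 0 := by
  obtain ⟨hq, hn⟩ := one_lt_and_ne_zero_of_card_eq hF
  have hle : q - 1 ≤ q ^ n - 1 := Nat.sub_le_sub_right (Nat.le_self_pow hn q) 1
  exact zero_pow (Nat.div_pos hle (by omega)).ne'

lemma qNorm_pow_self (hF : Fintype.card F = q ^ n) (x : F) : qNorm q n x ^ q = qNorm q n x := by
  obtain ⟨hq, -⟩ := one_lt_and_ne_zero_of_card_eq hF
  rcases eq_or_ne x 0 with rfl | hx
  · rw [qNorm_zero hF, zero_pow (by omega)]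
  obtain ⟨m, hm⟩ : q - 1 ∣ q ^ n - 1 := by simpa using Nat.sub_dvd_pow_sub_pow q 1 n
  have hexp : (q ^ n - 1) / (q - 1) * q = (q ^ n - 1) + (q ^ n - 1) / (q - 1) := by
    rw [hm, Nat.mul_div_cancel_left m (by omega)]
    zify [hq.le]
    ring
  rw [qNorm, ← pow_mul, hexp, pow_add, ← hF, FiniteField.pow_card_sub_one_eq_one x hx, one_mul]

lemma qNorm_pow_pow (hF : Fintype.card F = q ^ n) (x : F) (k : ℕ) :
    qNorm q n (x ^ q ^ k) = qNorm q n x := by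
  have h : IsFixedPt (· ^ q) (qNorm q n x) := qNorm_pow_self hF x
  have := h.iterate k
  rw [IsFixedPt, pow_iterate] at this
  rw [qNorm, pow_right_comm]
  exact this

lemma ne_zero_of_qNorm_eq_one (hF : Fintype.card F = q ^ n) {x : F} (hx : qNorm q n x = 1) :
    x ≠ 0 := by
  rintro rfl
  exact zero_ne_one ((qNorm_zero hF).symm.trans hx)

lemma exists_pow_pow_sub_one_eq (hF : Fintype.card F = q ^ n) {k : ℕ} (hk : k.Coprime n)
    {x : F} (hx : qNorm q n x = 1) : ∃ v ≠ 0, v ^ (q ^ k - 1) = x := by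
  have hx0 := ne_zero_of_qNorm_eq_one hF hx
  have hcard : Nat.card Fˣ = q ^ n - 1 := by
    rw [Nat.card_units, Nat.card_eq_fintype_card, hF]
  obtain ⟨v, hv⟩ : ∃ v : Fˣ, v ^ (q ^ k - 1) = Units.mk0 x hx0 := by
    apply IsCyclic.exists_pow_eq_of_pow_eq_one
    rw [hcard, Nat.pow_sub_one_gcd_pow_sub_one, Nat.Coprime.gcd_eq_one hk.symm, pow_one]
    ext
    exact hx
  exact ⟨v, v.ne_zero, by simpa using congrArg Units.val hv⟩
variable {s : ℕ}

lemma exists_pow_pow_eq_mul_pow_pow (hF : Fintype.card F = q ^ n) (hn : Odd n)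
    (hs : s.Coprime n) {c : F} (hc : qNorm q n c = 1) :
    ∃ v ≠ 0, v ^ q ^ (s * (n - 1)) = c * v ^ q ^ s := by
  have hc0 := ne_zero_of_qNorm_eq_one hF hc
  have hu : qNorm q n (c ^ q ^ s)⁻¹ = 1 := by
    rw [qNorm, inv_pow, ← qNorm, qNorm_pow_pow hF, hc, inv_one]
  have h2s : (2 * s).Coprime n := Nat.Coprime.mul_left (Nat.coprime_two_left.2 hn) hs
  obtain ⟨v, hv0, hv⟩ := exists_pow_pow_sub_one_eq hF h2s hu
  have hfix : v ^ q ^ (2 * s) * c ^ q ^ s = v := by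
    have : q ^ (2 * s) = (q ^ (2 * s) - 1) + 1 := by
      have := Nat.one_le_pow (2 * s) q (one_lt_and_ne_zero_of_card_eq hF).1.le
      omega
    rw [this, pow_add, pow_one, hv]
    field_simp
  have hsn := mul_pred_add_self s hn.pos
  refine ⟨v, hv0, ?_⟩
  calc v ^ q ^ (s * (n - 1))
      = (v ^ q ^ (2 * s) * c ^ q ^ s) ^ q ^ (s * (n - 1)) := by rw [hfix]
    _ = v ^ q ^ (s + n * s) * c ^ q ^ (0 + n * s) := by
      rw [mul_pow, ← pow_mul, ← pow_mul, ← pow_add, ← pow_add]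
      congr 3 <;> omega
    _ = c * v ^ q ^ s := by
      rw [pow_pow_add_mul_of_card_eq hF, pow_pow_add_mul_of_card_eq hF, pow_zero, pow_one, mul_comm]

lemma exists_lpMap_div_eq (hF : Fintype.card F = q ^ n) (hn : Odd n) (hs : s.Coprime n)
    {δ : F} (hδ : qNorm q n δ = 1) {ρ : F} (hρ : ρ ^ q ≠ ρ) :
    ∃ x₀ ≠ 0, lpMap q n s δ (ρ * x₀) / (ρ * x₀) = lpMap q n s δ x₀ / x₀ := by
  set a := ρ - ρ ^ q ^ s
  set b := ρ ^ q ^ (s * (n - 1)) - ρ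
  have hba : b ^ q ^ s = a := by
    rw [sub_pow_pow_of_card_eq hF, ← pow_mul, ← pow_add, mul_pred_add_self s hn.pos,
      ← zero_add (n * s), pow_pow_add_mul_of_card_eq hF, pow_zero, pow_one]
  have ha : a ≠ 0 := sub_ne_zero.2 fun h => hρ (pow_eq_self_of_pow_pow_eq_self hF hs h.symm)
  have hb : b ≠ 0 := by
    rintro hb
    rw [hb, zero_pow (pow_ne_zero _ (one_lt_and_ne_zero_of_card_eq hF).1.ne_bot)] at hba
    exact ha hba.symm
  set c := δ * a / b
  have hc : qNorm q n c = 1 := by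
    have : qNorm q n c = qNorm q n δ * qNorm q n a / qNorm q n b := by
      simp only [qNorm, c, div_pow, mul_pow]
    have hb' : qNorm q n b ≠ 0 := pow_ne_zero _ hb
    rw [this, hδ, ← hba, qNorm_pow_pow hF, one_mul, div_self hb']
  obtain ⟨v, hv0, hv⟩ := exists_pow_pow_eq_mul_pow_pow hF hn hs hc
  have hbc : b * c = δ * a := mul_div_cancel₀ _ hb
  refine ⟨v, hv0, ?_⟩
  rw [div_eq_div_iff (mul_ne_zero (ne_zero_of_pow_ne_self hF hρ) hv0) hv0, lpMap, lpMap,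
    mul_pow, mul_pow]
  linear_combination v * b * hv + v * v ^ q ^ s * hbc

lemma exists_pow_ne_self (hF : Fintype.card F = q ^ n) (hn : 1 < n) : ∃ ρ : F, ρ ^ q ≠ ρ := by
  obtain ⟨hq, -⟩ := one_lt_and_ne_zero_of_card_eq hF
  obtain ⟨g, hg⟩ := IsCyclic.exists_ofOrder_eq_natCard (α := Fˣ)
  refine ⟨g, fun hgq => ?_⟩
  have hg1 : g ^ (q - 1) = 1 := by
    refine mul_right_cancel (b := g) ?_
    rw [← pow_succ, Nat.sub_add_cancel hq.le, one_mul]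
    exact Units.ext (by simpa using hgq)
  have hdvd := orderOf_dvd_of_pow_eq_one hg1
  rw [hg, Nat.card_units, Nat.card_eq_fintype_card, hF] at hdvd
  have hlt : q < q ^ n := by simpa using Nat.pow_lt_pow_right hq hn
  have := Nat.le_of_dvd (by omega) hdvd
  omega

end FiniteField

theorem LP_not_scattered_general (q n s : ℕ) (hn : Odd n) (hn1 : 1 < n)
    (hs : Nat.gcd s n = 1)
    (F : Type) [Field F] [Fintype F] (hF : Fintype.card F = q ^ n) (δ : F)
    (hδ : δ ^ ((q ^ n - 1) / (q - 1)) = 1) :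
    (∀ ρ : F, ρ ^ q ≠ ρ → ∃ x₀ : F, x₀ ≠ 0 ∧
        ((ρ * x₀) ^ q ^ (s * (n - 1)) + δ * (ρ * x₀) ^ q ^ s) / (ρ * x₀) =
          (x₀ ^ q ^ (s * (n - 1)) + δ * x₀ ^ q ^ s) / x₀) ∧
      ¬ (∀ y z : F, y ≠ 0 → z ≠ 0 →
          (y ^ q ^ (s * (n - 1)) + δ * y ^ q ^ s) / y =
            (z ^ q ^ (s * (n - 1)) + δ * z ^ q ^ s) / z →
          (y / z) ^ q = y / z) := by
  refine ⟨fun ρ hρ => exists_lpMap_div_eq hF hn hs hδ hρ, fun hscattered => ?_⟩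
  obtain ⟨ρ, hρ⟩ := exists_pow_ne_self hF hn1
  obtain ⟨x₀, hx₀, hρx₀⟩ := exists_lpMap_div_eq hF hn hs hδ hρ
  have := hscattered (ρ * x₀) x₀ (mul_ne_zero (ne_zero_of_pow_ne_self hF hρ) hx₀) hx₀ hρx₀
  rw [mul_div_cancel_right₀ _ hx₀] at this
  exact hρ this

/-- If `n` is odd, `gcd(s,n) = 1` and `N_{q^n/q}(δ) = 1`, then for every
`ρ ∈ F_{q^n} \ F_q` there is `x₀ ≠ 0` with `f(ρ x₀)/(ρ x₀) = f(x₀)/x₀`, where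
`f(x) = x^{q^{s(n-1)}} + δ x^{q^s}`; in particular the LP polynomial `f` is not scattered. -/
theorem LP_not_scattered (q n s : ℕ) (hq : IsPrimePow q) (hn : Odd n) (hn1 : 1 < n)
    (hs : Nat.gcd s n = 1)
    (F : Type) [Field F] [Fintype F] (hF : Fintype.card F = q ^ n) (δ : F)
    (hδ : δ ^ ((q ^ n - 1) / (q - 1)) = 1) :
    (∀ ρ : F, ρ ^ q ≠ ρ → ∃ x₀ : F, x₀ ≠ 0 ∧
        ((ρ * x₀) ^ q ^ (s * (n - 1)) + δ * (ρ * x₀) ^ q ^ s) / (ρ * x₀) =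
          (x₀ ^ q ^ (s * (n - 1)) + δ * x₀ ^ q ^ s) / x₀) ∧
      ¬ (∀ y z : F, y ≠ 0 → z ≠ 0 →
          (y ^ q ^ (s * (n - 1)) + δ * y ^ q ^ s) / y =
            (z ^ q ^ (s * (n - 1)) + δ * z ^ q ^ s) / z →
          (y / z) ^ q = y / z) :=
  LP_not_scattered_general q n s hn hn1 hs F hF δ hδ
end

section
/- Let n = t·t′ with t > 1, s, k > 0, gcd(s,t) = 1, kt+s < n, and α ∈ F_{q^n}^* with N_{q^n/q^{t·gcd(k,t′)}}(−α) ≠ 1. Then for every a ∈ F_{q^{t·gcd(k,t′)}}^*, the diagonal matrix diag(a, a^{q^s}) belongs to the linear automorphism group of f(x) = x^{q^{kt+s}} + α x^{q^s}; that is, for every x ∈ F_{q^n} there exists y ∈ F_{q^n} with a x = y and a^{q^s} f(x) = f(y). -/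
section PowPow

variable {M : Type*} [Monoid M] {a : M} {q : ℕ}

theorem pow_pow_mul_eq_self {d : ℕ} (h : a ^ q ^ d = a) (m : ℕ) : a ^ q ^ (d * m) = a := by
  induction m with
  | zero => simp
  | succ m ih => rw [Nat.mul_succ, pow_add, pow_mul, ih, h]

theorem pow_pow_eq_self_of_dvd {d e : ℕ} (h : a ^ q ^ d = a) (hde : d ∣ e) : a ^ q ^ e = a := by
  obtain ⟨m, rfl⟩ := hde
  exact pow_pow_mul_eq_self h m

theorem pow_pow_add_eq_of_pow_pow_eq_self {e : ℕ} (h : a ^ q ^ e = a) (s : ℕ) :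
    a ^ q ^ (e + s) = a ^ q ^ s := by
  rw [pow_add, pow_mul, h]

end PowPow

theorem binomial_apply_mul_of_pow_pow_eq_self {R : Type*} [CommSemiring R] {a : R} {q e : ℕ}
    (h : a ^ q ^ e = a) (s : ℕ) (α x : R) :
    (a * x) ^ q ^ (e + s) + α * (a * x) ^ q ^ s =
      a ^ q ^ s * (x ^ q ^ (e + s) + α * x ^ q ^ s) := by
  rw [mul_pow, mul_pow, pow_pow_add_eq_of_pow_pow_eq_self h s]
  ring

theorem binomial_automorphism_group_contains_general (q t t' s k : ℕ)
    (F : Type) [Field F] (α : F) :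
    ∀ a : F, a ≠ 0 → a ^ q ^ (t * Nat.gcd k t') = a →
      ∀ x : F, (a * x) ^ q ^ (k * t + s) + α * (a * x) ^ q ^ s =
        a ^ q ^ s * (x ^ q ^ (k * t + s) + α * x ^ q ^ s) := by
  intro a _ hfix x
  have hdvd : t * Nat.gcd k t' ∣ k * t :=
    mul_comm t k ▸ mul_dvd_mul_left t (Nat.gcd_dvd_left k t')
  exact binomial_apply_mul_of_pow_pow_eq_self (pow_pow_eq_self_of_dvd hfix hdvd) s α x

/-- For `f(x) = x^{q^{kt+s}} + α x^{q^s}` and every `a ∈ F_{q^{t·gcd(k,t')}}^*`,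
the matrix `diag(a, a^{q^s})` belongs to the linear automorphism group of `f`,
i.e. `f(a x) = a^{q^s} f(x)` for all `x`. -/
theorem binomial_automorphism_group_contains (q t t' s k : ℕ) (hq : IsPrimePow q)
    (ht : 1 < t) (ht' : 0 < t') (hs0 : 0 < s) (hk : 0 < k) (hs : Nat.gcd s t = 1)
    (hlt : k * t + s < t * t')
    (F : Type) [Field F] [Fintype F] (hF : Fintype.card F = q ^ (t * t')) (α : F)
    (hα : α ≠ 0)
    (hnorm : (-α) ^ ((q ^ (t * t') - 1) / (q ^ (t * Nat.gcd k t') - 1)) ≠ 1) :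
    ∀ a : F, a ≠ 0 → a ^ q ^ (t * Nat.gcd k t') = a →
      ∀ x : F, (a * x) ^ q ^ (k * t + s) + α * (a * x) ^ q ^ s =
        a ^ q ^ s * (x ^ q ^ (k * t + s) + α * x ^ q ^ s) :=
  binomial_automorphism_group_contains_general q t t' s k F α
end
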